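/- arXiv:2406.13508 — 2 statements merged into one kernel-verified Lean document; each statement's English description precedes it below -/
import Mathlib

section
/- Let $\kappa, \sigma, T > 0$ and $\phi \in \mathbb{R}$ with $0 < \phi < \frac{2\kappa}{\sigma^2(2e^{\kappa T} - 1)}$. Then the function $G(t) = \frac{2\kappa}{\sigma^2 + e^{\kappa(T-t)}\left(\frac{2\kappa}{\phi} - \sigma^2\right)}$ is well-defined on $[0,T]$ (the denominator never vanishes) and satisfies the Riccati ODE $G'(t) - \kappa G(t) + \frac{1}{2}\sigma^2 G(t)^2 = 0$ with terminal condition $G(T) = \phi$. -/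
noncomputable def Gfun (κ σ T φ : ℝ) (t : ℝ) : ℝ :=
  2 * κ / (σ ^ 2 + Real.exp (κ * (T - t)) * (2 * κ / φ - σ ^ 2))

/- The denominator `D t = σ² + e^{κ(T-t)} c` of `G = 2κ / D` solves the linear equation
`D' = -κ (D - σ²)`, so `G' = 2κ² (D - σ²) / D² = κ G - σ² G² / 2`; at `t = T` it equals `2κ / φ`.
It stays positive because the bound on `φ` forces `c = 2κ / φ - σ² > 0`. -/

open Real

lemma sq_lt_two_mul_div_of_lt {κ σ φ m : ℝ} (hσ : 0 < σ) (hφ : 0 < φ) (hm : 1 ≤ m)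
    (hφm : φ < 2 * κ / (σ ^ 2 * (2 * m - 1))) :
    σ ^ 2 < 2 * κ / φ := by
  have hσ2 : 0 < σ ^ 2 := by positivity
  have hφm' : φ * (σ ^ 2 * (2 * m - 1)) < 2 * κ :=
    (lt_div_iff₀ (by nlinarith)).mp hφm
  rw [lt_div_iff₀ hφ]
  nlinarith [mul_pos hφ hσ2]

lemma Gfun_denom_pos {κ σ φ : ℝ} (T t : ℝ) (hc : σ ^ 2 < 2 * κ / φ) :
    0 < σ ^ 2 + exp (κ * (T - t)) * (2 * κ / φ - σ ^ 2) := by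
  have := sub_pos.mpr hc
  positivity

lemma hasDerivAt_Gfun {κ σ T φ t : ℝ}
    (hD : σ ^ 2 + exp (κ * (T - t)) * (2 * κ / φ - σ ^ 2) ≠ 0) :
    HasDerivAt (Gfun κ σ T φ)
      (κ * Gfun κ σ T φ t - (1 / 2) * σ ^ 2 * (Gfun κ σ T φ t) ^ 2) t := by
  have hexp : HasDerivAt (fun t => exp (κ * (T - t))) (exp (κ * (T - t)) * -κ) t := by
    simpa using (((hasDerivAt_const t T).sub (hasDerivAt_id t)).const_mul κ).exp
  have hG : HasDerivAt (Gfun κ σ T φ) _ t := (hasDerivAt_const t (2 * κ)).fun_div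
    ((hexp.mul_const (2 * κ / φ - σ ^ 2)).const_add (σ ^ 2)) hD
  refine hG.congr_deriv ?_
  unfold Gfun
  field_simp
  ring

lemma Gfun_self {κ σ T φ : ℝ} (hκ : κ ≠ 0) (hφ : φ ≠ 0) : Gfun κ σ T φ T = φ := by
  simp only [Gfun, sub_self, mul_zero, exp_zero, one_mul, add_sub_cancel]
  field_simp

theorem stmt3 (κ σ T φ : ℝ) (hκ : 0 < κ) (hσ : 0 < σ) (hT : 0 < T)
    (hφ : 0 < φ) (hφ2 : φ < 2 * κ / (σ ^ 2 * (2 * Real.exp (κ * T) - 1))) :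
    (∀ t ∈ Set.Icc (0:ℝ) T,
      σ ^ 2 + Real.exp (κ * (T - t)) * (2 * κ / φ - σ ^ 2) ≠ 0) ∧
    (∀ t ∈ Set.Icc (0:ℝ) T,
      HasDerivAt (Gfun κ σ T φ)
        (κ * Gfun κ σ T φ t - (1 / 2) * σ ^ 2 * (Gfun κ σ T φ t) ^ 2) t) ∧
    Gfun κ σ T φ T = φ := by
  have hc : σ ^ 2 < 2 * κ / φ :=
    sq_lt_two_mul_div_of_lt hσ hφ (one_le_exp (mul_nonneg hκ.le hT.le)) hφ2
  exact ⟨fun t _ => (Gfun_denom_pos T t hc).ne',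
    fun t _ => hasDerivAt_Gfun (Gfun_denom_pos T t hc).ne', Gfun_self hκ.ne' hφ.ne'⟩
end

section
/- Let $\kappa, \sigma, T > 0$ and define, for $t \in [0,T]$: $\widetilde L_1(t) = \sigma^4(1 - e^{\kappa(T-t)})$, $\widetilde L_2(t) = 2\kappa\sigma^2(2e^{\kappa(T-t)} - 1)$, $\widetilde L_3(t) = -4\kappa^2 e^{\kappa(T-t)}$. If $0 < x < \frac{2\kappa}{\sigma^2(2e^{\kappa T}-1)}$, then $\widetilde L_1(t)x^2 + \widetilde L_2(t)x + \widetilde L_3(t) \le 0$ for all $t \in [0,T]$. -/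
theorem stmt19 (κ σ T x : ℝ) (hκ : 0 < κ) (hσ : 0 < σ) (hT : 0 < T)
    (hx : 0 < x) (hx2 : x < 2 * κ / (σ ^ 2 * (2 * Real.exp (κ * T) - 1))) :
    ∀ t ∈ Set.Icc (0:ℝ) T,
      σ ^ 4 * (1 - Real.exp (κ * (T - t))) * x ^ 2 +
        2 * κ * σ ^ 2 * (2 * Real.exp (κ * (T - t)) - 1) * x +
        (-(4 * κ ^ 2 * Real.exp (κ * (T - t)))) ≤ 0 := by
  intro t ht
  obtain ⟨ht0, htT⟩ := ht
  have hE1 : 1 < Real.exp (κ * T) := by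
    have : 0 < κ * T := by positivity
    nlinarith [Real.add_one_le_exp (κ * T)]
  have he1 : 1 ≤ Real.exp (κ * (T - t)) := by
    apply Real.one_le_exp
    nlinarith
  have heE : Real.exp (κ * (T - t)) ≤ Real.exp (κ * T) := by
    apply Real.exp_le_exp.mpr
    nlinarith
  have hden : 0 < σ ^ 2 * (2 * Real.exp (κ * T) - 1) := by
    have : 0 < σ ^ 2 := by positivity
    nlinarith
  have hkey : x * (σ ^ 2 * (2 * Real.exp (κ * T) - 1)) < 2 * κ := by
    rw [← lt_div_iff₀ hden]; exact hx2
  have h1 : x * (σ ^ 2 * (2 * Real.exp (κ * (T - t)) - 1)) ≤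
      x * (σ ^ 2 * (2 * Real.exp (κ * T) - 1)) := by
    nlinarith [mul_nonneg (mul_nonneg hx.le (sq_nonneg σ)) (sub_nonneg.mpr heE)]
  have hfirst : σ ^ 4 * (1 - Real.exp (κ * (T - t))) * x ^ 2 ≤ 0 := by
    nlinarith [mul_nonneg (mul_nonneg (by positivity : (0:ℝ) ≤ σ ^ 4)
      (sub_nonneg.mpr he1)) (sq_nonneg x)]
  nlinarith [mul_lt_mul_of_pos_left (lt_of_le_of_lt h1 hkey) (by positivity : (0:ℝ) < 2 * κ),
    mul_le_mul_of_nonneg_left he1 (by positivity : (0:ℝ) ≤ 4 * κ ^ 2)]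
end
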